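/- Let ξ, ξ₁ ∈ ℂ with ξ̄(1 + ξξ̄₁) + ξ̄₁(1 + ξ̄ξ₁) ≠ 0, and let s ∈ ℝ satisfy s² = (1 + ξξ̄)(1 + ξ₁ξ̄₁)(1 + ξ̄ξ₁)(1 + ξξ̄₁) (note this quantity is a nonnegative real number, since (1+ξ̄ξ₁)(1+ξξ̄₁) = |1+ξξ̄₁|²). Define ξ₀ = (ξξ̄ξ₁ξ̄₁ − 1 + s)/(ξ̄(1 + ξξ̄₁) + ξ̄₁(1 + ξ̄ξ₁)). Then ξ·(2ξ̄₀ξ₁ + 1 − ξ₀ξ̄₀) = (ξ₀ξ̄₀ − 1)ξ₁ + 2ξ₀; i.e. ξ₀ solves the equation ξ = R_{ξ₀}(ξ₁) expressing that ξ is the direction obtained by rotating ξ₁ through 180° about ξ₀, so ξ₀ is the normal direction at which an incident plane wave of normal direction −1/ξ̄₁ reflects into the outgoing direction ξ. -/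
import Mathlib


open ComplexConjugate

/-- the direction
`ξ₀ = (ξξ̄ξ₁ξ̄₁ − 1 + s)/(ξ̄(1 + ξξ̄₁) + ξ̄₁(1 + ξ̄ξ₁))`, where `s` is a real square
root of `(1 + ξξ̄)(1 + ξ₁ξ̄₁)(1 + ξ̄ξ₁)(1 + ξξ̄₁)`, solves the equation
`ξ·(2ξ̄₀ξ₁ + 1 − ξ₀ξ̄₀) = (ξ₀ξ̄₀ − 1)ξ₁ + 2ξ₀` expressing that `ξ = R_{ξ₀}(ξ₁)`,
i.e. `ξ₀` is the normal direction reflecting an incident plane wave of normal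
direction `−1/ξ̄₁` into the outgoing direction `ξ`. -/
theorem normal_direction_for_plane_wave (ξ ξ₁ : ℂ)
    (hden : conj ξ * (1 + ξ * conj ξ₁) + conj ξ₁ * (1 + conj ξ * ξ₁) ≠ 0)
    (s : ℝ)
    (hs : (s : ℂ) ^ 2 =
      (1 + ξ * conj ξ) * (1 + ξ₁ * conj ξ₁) * (1 + conj ξ * ξ₁) * (1 + ξ * conj ξ₁))
    (ξ₀ : ℂ)
    (hξ₀ : ξ₀ = (ξ * conj ξ * ξ₁ * conj ξ₁ - 1 + (s : ℂ)) /
      (conj ξ * (1 + ξ * conj ξ₁) + conj ξ₁ * (1 + conj ξ * ξ₁))) :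
    ξ * (2 * conj ξ₀ * ξ₁ + 1 - ξ₀ * conj ξ₀) = (ξ₀ * conj ξ₀ - 1) * ξ₁ + 2 * ξ₀ := by
  have hden2 : ξ * (1 + conj ξ * ξ₁) + ξ₁ * (1 + ξ * conj ξ₁) ≠ 0 := by
    intro h
    apply hden
    have := congrArg (starRingEnd ℂ) h
    simp only [map_add, map_mul, map_one, Complex.conj_conj, map_zero] at this
    linear_combination this
  have hdenc : conj (conj ξ * (1 + ξ * conj ξ₁) + conj ξ₁ * (1 + conj ξ * ξ₁)) ≠ 0 := by
    intro h
    exact hden (by simpa using congrArg (starRingEnd ℂ) h)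
  have hconj : conj ξ₀ = (ξ * conj ξ * ξ₁ * conj ξ₁ - 1 + (s : ℂ)) /
      (ξ * (1 + conj ξ * ξ₁) + ξ₁ * (1 + ξ * conj ξ₁)) := by
    rw [hξ₀, map_div₀, div_eq_div_iff hdenc hden2]
    simp only [map_add, map_mul, map_sub, map_one, Complex.conj_conj, Complex.conj_ofReal]
    ring
  set N : ℂ := ξ * conj ξ * ξ₁ * conj ξ₁ - 1 + (s : ℂ) with hN
  set D : ℂ := conj ξ * (1 + ξ * conj ξ₁) + conj ξ₁ * (1 + conj ξ * ξ₁) with hD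
  set Dc : ℂ := ξ * (1 + conj ξ * ξ₁) + ξ₁ * (1 + ξ * conj ξ₁) with hDc
  have hA : ξ₀ * D = N := by rw [hξ₀]; exact div_mul_cancel₀ _ hden
  have hB : conj ξ₀ * Dc = N := by rw [hconj]; exact div_mul_cancel₀ _ hden2
  have key : (ξ * (2 * conj ξ₀ * ξ₁ + 1 - ξ₀ * conj ξ₀)) * (D * Dc) =
      ((ξ₀ * conj ξ₀ - 1) * ξ₁ + 2 * ξ₀) * (D * Dc) := by
    rw [hN] at hA hB
    rw [hD, hDc]
    linear_combination (-(ξ * (conj ξ₀ * Dc)) - ξ₁ * (conj ξ₀ * Dc) - 2 * Dc) * hA +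
      (2 * ξ * ξ₁ * D - ξ * N - ξ₁ * N) * hB + (-(ξ + ξ₁)) * hs
  exact mul_right_cancel₀ (mul_ne_zero hden hden2) key
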